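/- Let A and B be n×n complex matrices with n ≥ 1, and let ‖·‖₂ denote the spectral norm (the operator norm of the induced linear map from ℂ^n to ℂ^n, each equipped with the Euclidean norm). Then |det A − det B| ≤ n · ‖A − B‖₂ · max(‖A‖₂, ‖B‖₂)^{n−1}. -/

import Mathlib

/-- The spectral norm of a square complex matrix: the operator norm of the
induced map on Euclidean space. -/
noncomputable def specNorm {n : ℕ} (M : Matrix (Fin n) (Fin n) ℂ) : ℝ :=
  ‖LinearMap.toContinuousLinearMap (Matrix.toEuclideanLin M)‖

/-!
By Hadamard's inequality the determinant, seen as a multilinear function of the columns in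
Euclidean space, is bounded by the product of the column norms. For such a multilinear map,
changing the arguments one at a time gives
`‖f m₁ - f m₂‖ ≤ card ι * max ‖m₁‖ ‖m₂‖ ^ (card ι - 1) * ‖m₁ - m₂‖` with the sup norm over
the arguments, and every column norm of a matrix is at most its spectral norm.
-/

open Module InnerProductSpace

namespace OrthonormalBasis

variable {𝕜 E ι : Type*} [RCLike 𝕜] [NormedAddCommGroup E] [InnerProductSpace 𝕜 E]

/- The Gram–Schmidt basis `b` of `v` has unimodular determinant with respect to `e`, and the
matrix of `v` in `b` is upper triangular with diagonal `⟪b i, v i⟫`. -/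
theorem norm_det_le_prod_norm_of_linearOrder [Fintype ι] [LinearOrder ι]
    [LocallyFiniteOrderBot ι] [DecidableEq ι] (e : OrthonormalBasis ι 𝕜 E) (v : ι → E) :
    ‖e.toBasis.det v‖ ≤ ∏ i, ‖v i‖ := by
  have : FiniteDimensional 𝕜 E := e.toBasis.finiteDimensional_of_finite
  let b := gramSchmidtOrthonormalBasis (finrank_eq_card_basis e.toBasis) v
  calc ‖e.toBasis.det v‖ = ‖e.toBasis.det b‖ * ‖b.toBasis.det v‖ := by
        rw [AlternatingMap.eq_smul_basis_det b.toBasis e.toBasis.det]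
        simp
    _ = ∏ i, ‖inner 𝕜 (b i) (v i)‖ := by
        rw [e.det_to_matrix_orthonormalBasis b, one_mul, gramSchmidtOrthonormalBasis_det,
          norm_prod]
    _ ≤ ∏ i, ‖v i‖ := by
        gcongr with i
        simpa [b.orthonormal.1 i] using norm_inner_le_norm (𝕜 := 𝕜) (b i) (v i)

theorem norm_det_le_prod_norm [Fintype ι] [DecidableEq ι] (e : OrthonormalBasis ι 𝕜 E)
    (v : ι → E) : ‖e.toBasis.det v‖ ≤ ∏ i, ‖v i‖ := by
  let σ := Fintype.equivFin ι
  have h := (e.reindex σ).norm_det_le_prod_norm_of_linearOrder (v ∘ σ.symm)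
  rwa [reindex_toBasis, Basis.det_reindex, Function.comp_assoc, σ.symm_comp_self,
    Function.comp_id, Function.comp_def, Equiv.prod_comp σ.symm fun i => ‖v i‖] at h

end OrthonormalBasis

namespace Matrix

variable {𝕜 m n : Type*} [RCLike 𝕜]

def euclideanCols (M : Matrix m n 𝕜) (j : n) : EuclideanSpace 𝕜 m :=
  WithLp.toLp 2 (Mᵀ j)

theorem euclideanCols_sub (M N : Matrix m n 𝕜) :
    (M - N).euclideanCols = M.euclideanCols - N.euclideanCols :=
  rfl

theorem det_eq_det_euclideanCols [Fintype n] [DecidableEq n] (M : Matrix n n 𝕜) :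
    M.det = (EuclideanSpace.basisFun n 𝕜).toBasis.det M.euclideanCols :=
  ((EuclideanSpace.basisFun n 𝕜).toBasis.det_apply M.euclideanCols).symm

theorem norm_euclideanCols_le [Fintype m] [Fintype n] [DecidableEq n] (M : Matrix m n 𝕜) :
    ‖M.euclideanCols‖ ≤ ‖LinearMap.toContinuousLinearMap (toEuclideanLin M)‖ := by
  refine pi_norm_le_iff_of_nonneg (norm_nonneg _) |>.mpr fun j => ?_
  have h := (LinearMap.toContinuousLinearMap (toEuclideanLin M)).le_opNorm
    (EuclideanSpace.single j 1)
  have hcol : toEuclideanLin M (EuclideanSpace.single j 1) = M.euclideanCols j := by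
    ext i
    simp [euclideanCols, mulVec_single]
  simpa [hcol] using h

end Matrix

theorem stmt4_general {n : ℕ} (A B : Matrix (Fin n) (Fin n) ℂ) :
    ‖A.det - B.det‖ ≤
      (n : ℝ) * specNorm (A - B) * max (specNorm A) (specNorm B) ^ (n - 1) := by
  let e := EuclideanSpace.basisFun (Fin n) ℂ
  have hadamard (v : Fin n → EuclideanSpace ℂ (Fin n)) :
      ‖e.toBasis.det v‖ ≤ 1 * ∏ j, ‖v j‖ := by
    rw [one_mul]
    exact e.norm_det_le_prod_norm v
  calc ‖A.det - B.det‖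
        = ‖e.toBasis.det A.euclideanCols - e.toBasis.det B.euclideanCols‖ := by
          rw [A.det_eq_det_euclideanCols, B.det_eq_det_euclideanCols]
    _ ≤ 1 * Fintype.card (Fin n) * max ‖A.euclideanCols‖ ‖B.euclideanCols‖ ^
          (Fintype.card (Fin n) - 1) * ‖A.euclideanCols - B.euclideanCols‖ :=
        e.toBasis.det.toMultilinearMap.norm_image_sub_le_of_bound zero_le_one hadamard _ _
    _ ≤ n * specNorm (A - B) * max (specNorm A) (specNorm B) ^ (n - 1) := by
        rw [← Matrix.euclideanCols_sub, Fintype.card_fin, one_mul, mul_right_comm]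
        unfold specNorm
        gcongr <;> exact Matrix.norm_euclideanCols_le _

/-- Ipsen–Rehman determinant perturbation inequality, used in the proof of
Lemma 6.5 of the paper. -/
theorem stmt4 {n : ℕ} (hn : 1 ≤ n) (A B : Matrix (Fin n) (Fin n) ℂ) :
    ‖A.det - B.det‖ ≤
      (n : ℝ) * specNorm (A - B) * max (specNorm A) (specNorm B) ^ (n - 1) :=
  stmt4_general A B
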